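/- Let T = {(1,1,1), (1,−1,−1), (−1,1,−1), (−1,−1,1)} and let [3,3]* = {A ∈ SO(3) : A(T) = T} ∪ {−A : A ∈ SO(3), A(T) = T}, a group of order 24. Then the subgroup of O(3) generated by the two maps R₁(x,y,z) = (x, −y, z) and S(x,y,z) = (−y, −z, x) equals [3,3]*. (This is the vertex-figure group of the regular complex K₂(1,2) at its base vertex.) -/

import Mathlib

/- STATEMENT 12: With T = {(1,1,1), (1,−1,−1), (−1,1,−1), (−1,−1,1)} and
[3,3]* = {A ∈ SO(3) : A(T) = T} ∪ (−I)·{A ∈ SO(3) : A(T) = T}, a group of order 24,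
the subgroup of O(3) generated by R₁(x,y,z) = (x, −y, z) and S(x,y,z) = (−y, −z, x)
equals [3,3]*. -/

noncomputable section

abbrev E3 : Type := EuclideanSpace ℝ (Fin 3)

def pt (x y z : ℝ) : E3 := WithLp.toLp 2 ![x, y, z]

/-- The regular tetrahedron inscribed at alternating vertices of the cube {±1}³. -/
def tetT : Set E3 := {pt 1 1 1, pt 1 (-1) (-1), pt (-1) 1 (-1), pt (-1) (-1) 1}

/-- The rotation group [3,3]⁺ of the tetrahedron. -/
def rotT : Set (E3 ≃ₗᵢ[ℝ] E3) :=
  {A : E3 ≃ₗᵢ[ℝ] E3 | LinearEquiv.det A.toLinearEquiv = 1 ∧ (⇑A) '' tetT = tetT}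

/-- The group [3,3]* = [3,3]⁺ ∪ (−I)[3,3]⁺. -/
def tet33star : Set (E3 ≃ₗᵢ[ℝ] E3) :=
  rotT ∪ {B | ∃ A ∈ rotT, ∀ x : E3, B x = -(A x)}

/-
The rotation group of `tetT` is generated by the 3-fold rotations `c : (x,y,z) ↦ (y,z,x)` about
the vertex `(1,1,1)` and `S` about the vertex `(-1,1,-1)`; both lie in `⟨R₁, S⟩`, since
`c = R₁ S R₁`. A rotation preserving `tetT` and fixing two of its vertices is the identity (the
only other candidate is a reflection), so orbit–stabilizer gives `|[3,3]⁺| = 4 · 3 = 12`, the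
stabilizer of `(1,1,1)` being `⟨c⟩`. Finally `(R₁ S)³ = -I` is central and `-I ∉ [3,3]⁺`, while
`-R₁` is a rotation of `tetT`, so `⟨R₁, S⟩ = [3,3]⁺ ∪ (-I)[3,3]⁺`, of order 24.
-/

namespace Subgroup

variable {G : Type*} [Group G]

def adjoinCentralInvolution (H : Subgroup G) {z : G} (hz : z ∈ center G) (hz₂ : z * z = 1) :
    Subgroup G where
  carrier := {g | g ∈ H ∨ z * g ∈ H}
  one_mem' := Or.inl H.one_mem
  mul_mem' := by
    have hz' := mem_center_iff.1 hz
    rintro a b (ha | ha) (hb | hb)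
    · exact Or.inl (H.mul_mem ha hb)
    · exact Or.inr (by rw [← mul_assoc, ← hz' a, mul_assoc]; exact H.mul_mem ha hb)
    · exact Or.inr (by rw [← mul_assoc]; exact H.mul_mem ha hb)
    · refine Or.inl ?_
      have := H.mul_mem ha hb
      rwa [mul_assoc, ← mul_assoc a, hz' a, ← mul_assoc, ← mul_assoc, hz₂, one_mul] at this
  inv_mem' := by
    rintro a (ha | ha)
    · exact Or.inl (H.inv_mem ha)
    · refine Or.inr ?_
      have := H.inv_mem ha
      rwa [mul_inv_rev, inv_eq_of_mul_eq_one_right hz₂, (mem_center_iff.1 hz) a⁻¹] at this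

variable {H : Subgroup G} {z : G} {hz : z ∈ center G} {hz₂ : z * z = 1}

theorem adjoinCentralInvolution_le {K : Subgroup G} (hH : H ≤ K) (hzK : z ∈ K) :
    H.adjoinCentralInvolution hz hz₂ ≤ K := by
  rintro g (hg | hg)
  · exact hH hg
  · simpa [← mul_assoc, hz₂] using K.mul_mem hzK (hH hg)

theorem card_adjoinCentralInvolution [Finite H] (hzH : z ∉ H) :
    Nat.card (H.adjoinCentralInvolution hz hz₂) = 2 * Nat.card H := by
  have hset : (H.adjoinCentralInvolution hz hz₂ : Set G) = (H : Set G) ∪ (z * ·) '' H := by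
    ext g
    refine or_congr Iff.rfl ⟨fun hg => ⟨z * g, hg, ?_⟩, ?_⟩
    · simp [← mul_assoc, hz₂]
    · rintro ⟨h, hh, rfl⟩
      simpa [← mul_assoc, hz₂] using hh
  have hdisj : Disjoint (H : Set G) ((z * ·) '' H) := by
    refine Set.disjoint_left.2 fun g hg ⟨h, hh, hzh⟩ => hzH ?_
    simpa [← hzh] using H.mul_mem hg (H.inv_mem hh)
  rw [← SetLike.coe_sort_coe, Nat.card_coe_set_eq, hset,
    Set.ncard_union_eq hdisj (Set.toFinite _) (Set.toFinite _),
    Set.ncard_image_of_injective _ (mul_right_injective z),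
    ← Nat.card_coe_set_eq, SetLike.coe_sort_coe, two_mul]

end Subgroup

namespace LinearIsometryEquiv

variable {R E : Type*} [Semiring R] [SeminormedAddCommGroup E] [Module R E]

instance applyMulAction : MulAction (E ≃ₗᵢ[R] E) E where
  smul f x := f x
  one_smul _ := rfl
  mul_smul _ _ _ := rfl

@[simp]
theorem smul_def (f : E ≃ₗᵢ[R] E) (x : E) : f • x = f x :=
  rfl

@[simps]
def toLinearEquivHom : (E ≃ₗᵢ[R] E) →* (E ≃ₗ[R] E) where
  toFun := toLinearEquiv
  map_one' := rfl
  map_mul' _ _ := rfl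

theorem neg_mem_center : neg R ∈ Subgroup.center (E ≃ₗᵢ[R] E) :=
  Subgroup.mem_center_iff.2 fun A => ext fun x => by simp

theorem neg_mul_neg_self : neg R * neg R = (1 : E ≃ₗᵢ[R] E) :=
  ext fun x => by simp

end LinearIsometryEquiv

theorem linearMap_ext_tet {M : Type*} [AddCommGroup M] [Module ℝ M] {f g : E3 →ₗ[ℝ] M}
    (h₁ : f (pt 1 1 1) = g (pt 1 1 1)) (h₂ : f (pt 1 (-1) (-1)) = g (pt 1 (-1) (-1)))
    (h₃ : f (pt (-1) 1 (-1)) = g (pt (-1) 1 (-1))) : f = g := by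
  have hx : ∀ x : E3, x = ((x 0 + x 1) / 2) • pt 1 1 1 + ((x 0 - x 2) / 2) • pt 1 (-1) (-1)
      + ((x 1 - x 2) / 2) • pt (-1) 1 (-1) := by
    intro x
    ext i
    fin_cases i <;> simp [pt] <;> ring
  ext x
  rw [hx x]
  simp only [map_add, map_smul, h₁, h₂, h₃]

theorem ncard_tetT : tetT.ncard = 4 := by
  rw [tetT, Set.ncard_insert_of_notMem, Set.ncard_insert_of_notMem, Set.ncard_pair] <;>
    simp [pt] <;> norm_num

open scoped Pointwise in
def rotSubgroup : Subgroup (E3 ≃ₗᵢ[ℝ] E3) :=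
  (LinearEquiv.det.comp LinearIsometryEquiv.toLinearEquivHom).ker ⊓
    MulAction.stabilizer (E3 ≃ₗᵢ[ℝ] E3) tetT

theorem mem_rotSubgroup {A : E3 ≃ₗᵢ[ℝ] E3} : A ∈ rotSubgroup ↔ A ∈ rotT :=
  Iff.rfl

section rotSubgroup

variable {A : E3 ≃ₗᵢ[ℝ] E3}

theorem det_eq_one_of_mem_rotSubgroup (hA : A ∈ rotSubgroup) :
    LinearMap.det (A.toLinearEquiv : E3 →ₗ[ℝ] E3) = 1 := by
  simpa [LinearEquiv.coe_det] using congrArg Units.val hA.1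

theorem mapsTo_tetT_of_mem_rotSubgroup (hA : A ∈ rotSubgroup) : Set.MapsTo A tetT tetT :=
  fun _ ht => hA.2 ▸ Set.mem_image_of_mem A ht

theorem mem_rotSubgroup_of_eq_toEuclideanLin (M : Matrix (Fin 3) (Fin 3) ℝ)
    (hA : ∀ x, A x = Matrix.toEuclideanLin M x) (hM : M.det = 1) (hT : Set.MapsTo A tetT tetT) :
    A ∈ rotSubgroup := by
  refine ⟨Units.ext ?_, ?_⟩
  · simp only [MonoidHom.comp_apply, LinearIsometryEquiv.toLinearEquivHom_apply,
      LinearEquiv.coe_det, Units.val_one]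
    rw [show (A.toLinearEquiv : E3 →ₗ[ℝ] E3) = Matrix.toEuclideanLin M from LinearMap.ext hA]
    simpa using hM
  · have hfin : tetT.Finite := by simp [tetT]
    exact ((hfin.injOn_iff_bijOn_of_mapsTo hT).1 A.injective.injOn).image_eq

/-- The only other permutation of `tetT` fixing two vertices is induced by a reflection. -/
theorem eq_one_of_mem_rotSubgroup_of_fix (hA : A ∈ rotSubgroup) (h₁ : A (pt 1 1 1) = pt 1 1 1)
    (h₂ : A (pt 1 (-1) (-1)) = pt 1 (-1) (-1)) : A = 1 := by
  have h₃ := mapsTo_tetT_of_mem_rotSubgroup hA (show pt (-1) 1 (-1) ∈ tetT by simp [tetT])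
  simp only [tetT, Set.mem_insert_iff, Set.mem_singleton_iff] at h₃
  rcases h₃ with h₃ | h₃ | h₃ | h₃
  · exact absurd (A.injective (h₃.trans h₁.symm)) (by simp [pt]; norm_num)
  · exact absurd (A.injective (h₃.trans h₂.symm)) (by simp [pt]; norm_num)
  · exact LinearIsometryEquiv.toLinearEquiv_injective
      (LinearEquiv.toLinearMap_injective (linearMap_ext_tet h₁ h₂ h₃))
  · have hdet := det_eq_one_of_mem_rotSubgroup hA
    have hM : ∀ x,
        Matrix.toEuclideanLin !![1, 0, 0; 0, 0, 1; 0, 1, 0] x = pt (x 0) (x 2) (x 1) := by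
      intro x
      ext i
      fin_cases i <;> simp [pt, Matrix.mulVec, dotProduct, Fin.sum_univ_three]
    rw [linearMap_ext_tet (f := (A.toLinearEquiv : E3 →ₗ[ℝ] E3))
      (g := Matrix.toEuclideanLin !![1, 0, 0; 0, 0, 1; 0, 1, 0])
      (by simpa [hM, pt] using h₁) (by simpa [hM, pt] using h₂)
      (by simpa [hM, pt] using h₃)] at hdet
    simp [Matrix.det_fin_three] at hdet
    norm_num at hdet

end rotSubgroup

section generators

variable {s c : E3 ≃ₗᵢ[ℝ] E3}

theorem mem_rotSubgroup_of_apply_eq_cycle (hc : ∀ x : E3, c x = pt (x 1) (x 2) (x 0)) :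
    c ∈ rotSubgroup :=
  mem_rotSubgroup_of_eq_toEuclideanLin !![0, 1, 0; 0, 0, 1; 1, 0, 0]
    (fun x => by
      ext i
      fin_cases i <;> simp [hc, pt, Matrix.mulVec, dotProduct, Fin.sum_univ_three])
    (by simp [Matrix.det_fin_three]) (by simp [Set.MapsTo, tetT, hc, pt])

theorem mem_rotSubgroup_of_apply_eq_signedCycle
    (hs : ∀ x : E3, s x = pt (-(x 1)) (-(x 2)) (x 0)) : s ∈ rotSubgroup :=
  mem_rotSubgroup_of_eq_toEuclideanLin !![0, -1, 0; 0, 0, -1; 1, 0, 0]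
    (fun x => by
      ext i
      fin_cases i <;> simp [hs, pt, Matrix.mulVec, dotProduct, Fin.sum_univ_three])
    (by simp [Matrix.det_fin_three]) (by simp [Set.MapsTo, tetT, hs, pt])

theorem mem_rotSubgroup_of_apply_eq_halfTurn {d : E3 ≃ₗᵢ[ℝ] E3}
    (hd : ∀ x : E3, d x = pt (-(x 0)) (x 1) (-(x 2))) : d ∈ rotSubgroup :=
  mem_rotSubgroup_of_eq_toEuclideanLin !![-1, 0, 0; 0, 1, 0; 0, 0, -1]
    (fun x => by
      ext i
      fin_cases i <;> simp [hd, pt, Matrix.mulVec, dotProduct, Fin.sum_univ_three])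
    (by simp [Matrix.det_fin_three]) (by simp [Set.MapsTo, tetT, hd, pt])

theorem orderOf_eq_three_of_apply_eq_cycle (hc : ∀ x : E3, c x = pt (x 1) (x 2) (x 0)) :
    orderOf c = 3 := by
  refine orderOf_eq_prime ?_ fun h => ?_
  · ext x i
    fin_cases i <;> simp [pow_succ, hc, pt]
  · have := congrArg (· (pt 1 0 0)) h
    simp [hc, pt] at this

theorem mem_zpowers_of_mem_rotSubgroup_of_fix (hc : ∀ x : E3, c x = pt (x 1) (x 2) (x 0))
    {A : E3 ≃ₗᵢ[ℝ] E3} (hA : A ∈ rotSubgroup) (h₁ : A (pt 1 1 1) = pt 1 1 1) :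
    A ∈ Subgroup.zpowers c := by
  have hcR := mem_rotSubgroup_of_apply_eq_cycle hc
  have h₂ := mapsTo_tetT_of_mem_rotSubgroup hA (show pt 1 (-1) (-1) ∈ tetT by simp [tetT])
  simp only [tetT, Set.mem_insert_iff, Set.mem_singleton_iff] at h₂
  rcases h₂ with h₂ | h₂ | h₂ | h₂
  · exact absurd (A.injective (h₂.trans h₁.symm)) (by simp [pt]; norm_num)
  · rw [eq_one_of_mem_rotSubgroup_of_fix hA h₁ h₂]
    exact one_mem _
  · have : c * A = 1 :=
      eq_one_of_mem_rotSubgroup_of_fix (mul_mem hcR hA)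
        (by simp only [LinearIsometryEquiv.coe_mul, Function.comp_apply, h₁]; simp [hc, pt])
        (by simp only [LinearIsometryEquiv.coe_mul, Function.comp_apply, h₂]; simp [hc, pt])
    rw [eq_inv_of_mul_eq_one_right this]
    exact inv_mem (Subgroup.mem_zpowers c)
  · have : c * c * A = 1 :=
      eq_one_of_mem_rotSubgroup_of_fix (mul_mem (mul_mem hcR hcR) hA)
        (by simp only [LinearIsometryEquiv.coe_mul, Function.comp_apply, h₁]; simp [hc, pt])
        (by simp only [LinearIsometryEquiv.coe_mul, Function.comp_apply, h₂]; simp [hc, pt])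
    rw [eq_inv_of_mul_eq_one_right this]
    exact inv_mem (mul_mem (Subgroup.mem_zpowers c) (Subgroup.mem_zpowers c))

theorem exists_mem_closure_apply_eq (hs : ∀ x : E3, s x = pt (-(x 1)) (-(x 2)) (x 0))
    (hc : ∀ x : E3, c x = pt (x 1) (x 2) (x 0)) {t : E3} (ht : t ∈ tetT) :
    ∃ u ∈ Subgroup.closure {s, c}, u ∈ rotSubgroup ∧ u t = pt 1 1 1 := by
  have hsR := mem_rotSubgroup_of_apply_eq_signedCycle hs
  have hcR := mem_rotSubgroup_of_apply_eq_cycle hc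
  have hsG : s ∈ Subgroup.closure {s, c} := Subgroup.subset_closure (by simp)
  have hcG : c ∈ Subgroup.closure {s, c} := Subgroup.subset_closure (by simp)
  simp only [tetT, Set.mem_insert_iff, Set.mem_singleton_iff] at ht
  rcases ht with rfl | rfl | rfl | rfl
  · exact ⟨1, one_mem _, one_mem _, rfl⟩
  · exact ⟨s, hsG, hsR, by simp [hs, pt]⟩
  · exact ⟨s * c, mul_mem hsG hcG, mul_mem hsR hcR, by simp [hs, hc, pt]⟩
  · exact ⟨s * c * c, mul_mem (mul_mem hsG hcG) hcG, mul_mem (mul_mem hsR hcR) hcR,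
      by simp [hs, hc, pt]⟩

theorem rotSubgroup_le_closure (hs : ∀ x : E3, s x = pt (-(x 1)) (-(x 2)) (x 0))
    (hc : ∀ x : E3, c x = pt (x 1) (x 2) (x 0)) : rotSubgroup ≤ Subgroup.closure {s, c} := by
  intro A hA
  obtain ⟨u, hu, huR, hu₁⟩ :=
    exists_mem_closure_apply_eq hs hc
      (mapsTo_tetT_of_mem_rotSubgroup hA (show pt 1 1 1 ∈ tetT by simp [tetT]))
  have hcG : Subgroup.zpowers c ≤ Subgroup.closure {s, c} :=
    Subgroup.zpowers_le.2 (Subgroup.subset_closure (by simp))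
  simpa using
    mul_mem (inv_mem hu) (hcG (mem_zpowers_of_mem_rotSubgroup_of_fix hc (mul_mem huR hA) hu₁))

theorem card_rotSubgroup (hs : ∀ x : E3, s x = pt (-(x 1)) (-(x 2)) (x 0))
    (hc : ∀ x : E3, c x = pt (x 1) (x 2) (x 0)) : Nat.card rotSubgroup = 12 := by
  have hcR := mem_rotSubgroup_of_apply_eq_cycle hc
  have horbit : MulAction.orbit rotSubgroup (pt 1 1 1) = tetT := by
    ext t
    constructor
    · rintro ⟨⟨A, hA⟩, rfl⟩
      exact mapsTo_tetT_of_mem_rotSubgroup hA (show pt 1 1 1 ∈ tetT by simp [tetT])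
    · intro ht
      obtain ⟨u, -, huR, hu⟩ := exists_mem_closure_apply_eq hs hc ht
      exact ⟨⟨u, huR⟩⁻¹, by rw [← hu]; exact u.symm_apply_apply t⟩
  have hstab : MulAction.stabilizer rotSubgroup (pt 1 1 1) = Subgroup.zpowers ⟨c, hcR⟩ := by
    refine le_antisymm (fun ⟨A, hA⟩ h => ?_) (Subgroup.zpowers_le.2 (by simp [hc, pt]))
    obtain ⟨k, hk⟩ := Subgroup.mem_zpowers_iff.1 (mem_zpowers_of_mem_rotSubgroup_of_fix hc hA h)
    exact ⟨k, Subtype.ext (by simpa using hk)⟩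
  rw [← (MulAction.stabilizer rotSubgroup (pt 1 1 1)).card_mul_index, MulAction.index_stabilizer,
    horbit, hstab, Nat.card_zpowers, Subgroup.orderOf_mk, orderOf_eq_three_of_apply_eq_cycle hc,
    ncard_tetT]

end generators

theorem neg_not_mem_rotSubgroup : LinearIsometryEquiv.neg ℝ ∉ rotSubgroup := fun h => by
  have := mapsTo_tetT_of_mem_rotSubgroup h (show pt 1 1 1 ∈ tetT by simp [tetT])
  simp [tetT, pt, ← WithLp.toLp_neg] at this
  norm_num at this

theorem tet33star_eq :
    tet33star = rotSubgroup.adjoinCentralInvolution LinearIsometryEquiv.neg_mem_center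
      LinearIsometryEquiv.neg_mul_neg_self := by
  ext B
  refine or_congr mem_rotSubgroup.symm
    ⟨fun ⟨A, hA, hBA⟩ => ?_, fun h => ⟨_, h, fun x => by simp⟩⟩
  rwa [show LinearIsometryEquiv.neg ℝ * B = A from
    LinearIsometryEquiv.ext fun x => by simp [hBA]]

theorem vertex_figure_group_K2_12
    (R1 S : E3 ≃ₗᵢ[ℝ] E3)
    (hR1 : ∀ x : E3, R1 x = pt (x 0) (-(x 1)) (x 2))
    (hS : ∀ x : E3, S x = pt (-(x 1)) (-(x 2)) (x 0)) :
    (Subgroup.closure {R1, S} : Set (E3 ≃ₗᵢ[ℝ] E3)) = tet33star ∧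
      Nat.card tet33star = 24 := by
  have hC : ∀ x : E3, (R1 * S * R1) x = pt (x 1) (x 2) (x 0) := fun x => by simp [hR1, hS, pt]
  have hD : ∀ x : E3,
      (LinearIsometryEquiv.neg ℝ * R1 : E3 ≃ₗᵢ[ℝ] E3) x = pt (-(x 0)) (x 1) (-(x 2)) :=
    fun x => by simp [hR1, pt, ← WithLp.toLp_neg]
  have hnegI : (R1 * S) ^ 3 = LinearIsometryEquiv.neg ℝ := by
    ext x i
    fin_cases i <;> simp [pow_succ, hR1, hS, pt]
  have hR1G : R1 ∈ Subgroup.closure {R1, S} := Subgroup.subset_closure (by simp)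
  have hSG : S ∈ Subgroup.closure {R1, S} := Subgroup.subset_closure (by simp)
  have hG : Subgroup.closure {R1, S} = rotSubgroup.adjoinCentralInvolution
      LinearIsometryEquiv.neg_mem_center LinearIsometryEquiv.neg_mul_neg_self := by
    refine le_antisymm ((Subgroup.closure_le _).2 ?_) (Subgroup.adjoinCentralInvolution_le ?_ ?_)
    · rintro g (rfl | rfl)
      exacts [Or.inr (mem_rotSubgroup_of_apply_eq_halfTurn hD),
        Or.inl (mem_rotSubgroup_of_apply_eq_signedCycle hS)]
    · refine (rotSubgroup_le_closure hS hC).trans ((Subgroup.closure_le _).2 ?_)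
      rintro g (rfl | rfl)
      exacts [hSG, mul_mem (mul_mem hR1G hSG) hR1G]
    · exact hnegI ▸ pow_mem (mul_mem hR1G hSG) 3
  have hcard := card_rotSubgroup hS hC
  have : Finite rotSubgroup := Nat.finite_of_card_ne_zero (by rw [hcard]; norm_num)
  rw [tet33star_eq, ← hG]
  refine ⟨rfl, ?_⟩
  rw [SetLike.coe_sort_coe, hG, Subgroup.card_adjoinCentralInvolution neg_not_mem_rotSubgroup,
    hcard]
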